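/- Let β, γ, δ, μ > 0 be real and a ∈ ℝ. Then the Riemann–Liouville fractional integral of order μ applied to t ↦ t^{γ-1} E^δ_{β,γ}(a t^β) equals t^{γ+μ-1} E^δ_{β,γ+μ}(a t^β): (₀D_t^{-μ})(u^{γ-1} E^δ_{β,γ}(a u^β))(t) = t^{γ+μ-1} E^δ_{β,γ+μ}(a t^β) for t > 0. -/

import Mathlib

/-!
Expand `E^δ_{β,γ}(a u^β)` as a power series: the `τ`-th term of the integrand is a multiple of
`u^(βτ+γ-1)`, whose Riemann–Liouville integral of order `μ` is
`Γ(βτ+γ)/Γ(βτ+γ+μ) · t^(βτ+γ+μ-1)` by Euler's Beta integral. The factor `Γ(βτ+γ)` cancels the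
denominator of the `τ`-th coefficient of `E^δ_{β,γ}` and leaves that of `E^δ_{β,γ+μ}`.
Integrating termwise is legitimate because the integrals of the absolute values of the terms are,
up to a common factor, the absolute values of the terms of `E^δ_{β,γ+μ}(a t^β)`, a series that
converges absolutely by the ratio test, since `Γ(s)/Γ(s+β) → 0` by the log-convexity of `Γ`.
-/

open MeasureTheory Real Filter Set Topology

/-- Prabhakar generalized Mittag-Leffler function (real argument). -/
noncomputable def prabhakar (β γ δ : ℝ) (z : ℝ) : ℝ :=
  ∑' τ : ℕ, (ascPochhammer ℝ τ).eval δ * z ^ τ /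
    (Real.Gamma (β * τ + γ) * (τ.factorial : ℝ))

/-- Riemann–Liouville fractional integral of order μ. -/
noncomputable def rlInt (μ : ℝ) (f : ℝ → ℝ) (t : ℝ) : ℝ :=
  (1 / Real.Gamma μ) * ∫ u in (0:ℝ)..t, (t - u) ^ (μ - 1) * f u

namespace Real

theorem rpow_mul_Gamma_le_Gamma_add {s b : ℝ} (hs : 1 < s) (hb : 0 < b) :
    (s - 1) ^ b * Gamma s ≤ Gamma (s + b) := by
  -- the slope of `log ∘ Gamma` on `[s - 1, s]` is `log (s - 1)`
  have hslope := convexOn_log_Gamma.slope_mono_adjacent (x := s - 1) (y := s) (z := s + b)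
    (mem_Ioi.2 (by linarith)) (mem_Ioi.2 (by linarith)) (by linarith) (by linarith)
  have hrec : Gamma s = (s - 1) * Gamma (s - 1) := by
    simpa using Gamma_add_one (s := s - 1) (by linarith)
  have hΓ : 0 < Gamma (s - 1) := Gamma_pos_of_pos (by linarith)
  simp only [Function.comp_apply, sub_sub_cancel, div_one, add_sub_cancel_left, hrec,
    log_mul (by linarith : s - 1 ≠ 0) hΓ.ne', add_sub_cancel_right, le_div_iff₀ hb] at hslope
  rw [← log_le_log_iff (by positivity) (Gamma_pos_of_pos (by linarith)), log_mul (by positivity)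
    (by positivity), log_rpow (by linarith), hrec, log_mul (by linarith) hΓ.ne']
  linarith

theorem tendsto_Gamma_div_Gamma_add_atTop {b : ℝ} (hb : 0 < b) :
    Tendsto (fun s => Gamma s / Gamma (s + b)) atTop (𝓝 0) := by
  have hlim : Tendsto (fun s : ℝ => (s - 1) ^ (-b)) atTop (𝓝 0) :=
    (tendsto_rpow_neg_atTop hb).comp (tendsto_atTop_add_const_right _ _ tendsto_id)
  refine squeeze_zero' ?_ ?_ hlim
  · filter_upwards [eventually_gt_atTop 0] with s hs
    exact div_nonneg (Gamma_pos_of_pos hs).le (Gamma_pos_of_pos (by linarith)).le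
  · filter_upwards [eventually_gt_atTop 1] with s hs
    rw [div_le_iff₀ (Gamma_pos_of_pos (by linarith)), rpow_neg (by linarith),
      inv_mul_eq_div, le_div_iff₀ (by apply rpow_pos_of_pos; linarith), mul_comm]
    exact rpow_mul_Gamma_le_Gamma_add hs hb

theorem rpow_mul_natCast_add_sub_one {u : ℝ} (hu : 0 < u) (β γ : ℝ) (τ : ℕ) :
    u ^ (β * τ + γ - 1) = (u ^ β) ^ τ * u ^ (γ - 1) := by
  rw [← rpow_natCast, ← rpow_mul hu.le, ← rpow_add hu, add_sub_assoc]

end Real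

theorem integral_rpow_mul_sub_rpow {p q t : ℝ} (hp : 0 < p) (hq : 0 < q) (ht : 0 < t) :
    ∫ u in (0:ℝ)..t, u ^ (p - 1) * (t - u) ^ (q - 1) =
      t ^ (p + q - 1) * ProbabilityTheory.beta p q := by
  have hcpx := Complex.betaIntegral_scaled p q ht
  rw [Complex.betaIntegral_eq_Gamma_mul_div _ _ (by simpa) (by simpa)] at hcpx
  apply Complex.ofReal_injective
  rw [← intervalIntegral.integral_ofReal]
  convert hcpx using 1
  · refine intervalIntegral.integral_congr fun u hu => ?_
    rw [uIcc_of_le ht.le] at hu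
    push_cast [Complex.ofReal_cpow hu.1, Complex.ofReal_cpow (sub_nonneg.2 hu.2)]
    rfl
  · push_cast [ProbabilityTheory.beta, Complex.ofReal_cpow ht.le, ← Complex.ofReal_add,
      Complex.Gamma_ofReal]
    rfl

theorem intervalIntegrable_rpow_mul_sub_rpow {p q t : ℝ} (hp : 0 < p) (hq : 0 < q) (ht : 0 < t) :
    IntervalIntegrable (fun u => u ^ (p - 1) * (t - u) ^ (q - 1)) volume 0 t := by
  -- a non-integrable function has integral `0`, but the Beta integral is positive
  by_contra h
  have := intervalIntegral.integral_undef h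
  rw [integral_rpow_mul_sub_rpow hp hq ht] at this
  exact (mul_pos (rpow_pos_of_pos ht _) (ProbabilityTheory.beta_pos hp hq)).ne' this

theorem rlInt_rpow_sub_one {p μ t : ℝ} (hp : 0 < p) (hμ : 0 < μ) (ht : 0 < t) :
    rlInt μ (fun u => u ^ (p - 1)) t = Gamma p / Gamma (p + μ) * t ^ (p + μ - 1) := by
  simp_rw [rlInt, mul_comm ((t - _) ^ (μ - 1)), integral_rpow_mul_sub_rpow hp hμ ht,
    ProbabilityTheory.beta]
  field_simp

theorem rlInt_congr {μ t : ℝ} {f g : ℝ → ℝ} (ht : 0 ≤ t) (hfg : EqOn f g (Ioc 0 t)) :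
    rlInt μ f t = rlInt μ g t := by
  simp only [rlInt, intervalIntegral.integral_of_le ht]
  congr 1
  exact setIntegral_congr_fun measurableSet_Ioc fun u hu => by rw [hfg hu]

theorem rlInt_const_mul (μ c : ℝ) (f : ℝ → ℝ) (t : ℝ) :
    rlInt μ (fun u => c * f u) t = c * rlInt μ f t := by
  simp only [rlInt, mul_left_comm _ c, intervalIntegral.integral_const_mul]

theorem rlInt_tsum {μ t : ℝ} {f : ℕ → ℝ → ℝ} (hμ : 0 < μ) (ht : 0 ≤ t)
    (hint : ∀ n, IntervalIntegrable (fun u => (t - u) ^ (μ - 1) * f n u) volume 0 t)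
    (hsum : Summable fun n => rlInt μ (fun u => |f n u|) t) :
    rlInt μ (fun u => ∑' n, f n u) t = ∑' n, rlInt μ (f n) t := by
  have hnorm : ∀ n, ∫ u in Ioc 0 t, ‖(t - u) ^ (μ - 1) * f n u‖ =
      Gamma μ * rlInt μ (fun u => |f n u|) t := by
    intro n
    rw [rlInt, intervalIntegral.integral_of_le ht, ← mul_assoc, mul_one_div_cancel
      (Gamma_pos_of_pos hμ).ne', one_mul]
    refine setIntegral_congr_fun measurableSet_Ioc fun u hu => ?_
    rw [norm_mul, norm_of_nonneg (rpow_nonneg (sub_nonneg.2 hu.2) _), Real.norm_eq_abs]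
  simp only [rlInt, ← tsum_mul_left, intervalIntegral.integral_of_le ht]
  rw [← integral_tsum_of_summable_integral_norm, tsum_mul_left]
  · exact fun n => (intervalIntegrable_iff_integrableOn_Ioc_of_le ht).1 (hint n)
  · simpa only [hnorm] using hsum.mul_left (Gamma μ)

theorem rlInt_abs_const_mul_rpow_sub_one {p μ t : ℝ} (hp : 0 < p) (hμ : 0 < μ) (ht : 0 < t)
    (c : ℝ) : rlInt μ (fun u => |c * u ^ (p - 1)|) t = |rlInt μ (fun u => c * u ^ (p - 1)) t| := by
  have habs : EqOn (fun u => |c * u ^ (p - 1)|) (fun u => |c| * u ^ (p - 1)) (Ioc 0 t) :=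
    fun u hu => by simp only [abs_mul, abs_of_nonneg (rpow_nonneg hu.1.le _)]
  rw [rlInt_congr ht.le habs, rlInt_const_mul, rlInt_const_mul, abs_mul,
    abs_of_nonneg (a := rlInt μ _ t) (by rw [rlInt_rpow_sub_one hp hμ ht]; positivity)]

noncomputable def prabhakarTerm (β γ δ z : ℝ) (τ : ℕ) : ℝ :=
  (ascPochhammer ℝ τ).eval δ * z ^ τ / (Gamma (β * τ + γ) * τ.factorial)

theorem prabhakar_eq_tsum (β γ δ z : ℝ) : prabhakar β γ δ z = ∑' τ, prabhakarTerm β γ δ z τ :=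
  rfl

theorem prabhakarTerm_succ {β γ : ℝ} {τ : ℕ} (hΓ : Gamma (β * τ + γ) ≠ 0)
    (hΓ' : Gamma (β * τ + γ + β) ≠ 0) (δ z : ℝ) :
    prabhakarTerm β γ δ z (τ + 1) = prabhakarTerm β γ δ z τ *
      ((δ + τ) / (τ + 1) * z * (Gamma (β * τ + γ) / Gamma (β * τ + γ + β))) := by
  have harg : β * ((τ + 1 : ℕ) : ℝ) + γ = β * τ + γ + β := by push_cast; ring
  rw [prabhakarTerm, prabhakarTerm, harg, ascPochhammer_succ_eval, Nat.factorial_succ]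
  push_cast
  generalize Gamma (β * τ + γ) = A at hΓ ⊢
  generalize Gamma (β * τ + γ + β) = B at hΓ' ⊢
  field_simp
  ring

theorem summable_prabhakarTerm {β : ℝ} (hβ : 0 < β) (γ δ z : ℝ) :
    Summable (prabhakarTerm β γ δ z) := by
  have hs : Tendsto (fun τ : ℕ => β * τ + γ) atTop atTop :=
    tendsto_atTop_add_const_right _ _ (tendsto_natCast_atTop_atTop.const_mul_atTop hβ)
  have hratio : Tendsto (fun τ : ℕ => (|δ| + 1) * |z| *
      (Gamma (β * τ + γ) / Gamma (β * τ + γ + β))) atTop (𝓝 0) := by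
    simpa using ((tendsto_Gamma_div_Gamma_add_atTop hβ).comp hs).const_mul ((|δ| + 1) * |z|)
  refine summable_of_ratio_norm_eventually_le (r := 1 / 2) (by norm_num) ?_
  filter_upwards [hs.eventually_gt_atTop 0, hratio.eventually (eventually_le_nhds one_half_pos)]
    with τ hpos hsmall
  have hΓ := Gamma_pos_of_pos hpos
  have hΓ' : 0 < Gamma (β * τ + γ + β) := Gamma_pos_of_pos (by linarith)
  have hpoch : |(δ + τ) / (τ + 1)| ≤ |δ| + 1 := by
    rw [abs_div, div_le_iff₀ (by positivity), abs_of_pos (by positivity : (0 : ℝ) < τ + 1)]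
    nlinarith [abs_add_le δ τ, abs_nonneg δ, Nat.abs_cast (R := ℝ) τ]
  rw [prabhakarTerm_succ hΓ.ne' hΓ'.ne', norm_mul, mul_comm]
  refine mul_le_mul_of_nonneg_right ?_ (norm_nonneg _)
  rw [Real.norm_eq_abs, abs_mul, abs_mul, abs_of_pos (div_pos hΓ hΓ')]
  refine le_trans ?_ hsmall
  gcongr

theorem prabhakarTerm_mul_pow (β γ δ z w : ℝ) (τ : ℕ) :
    prabhakarTerm β γ δ z τ * w ^ τ = prabhakarTerm β γ δ (z * w) τ := by
  simp only [prabhakarTerm, mul_pow]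
  ring

theorem prabhakarTerm_mul_Gamma_div {β γ : ℝ} {τ : ℕ} (hΓ : Gamma (β * τ + γ) ≠ 0) (δ μ z : ℝ) :
    prabhakarTerm β γ δ z τ * (Gamma (β * τ + γ) / Gamma (β * τ + γ + μ)) =
      prabhakarTerm β (γ + μ) δ z τ := by
  simp only [prabhakarTerm, ← add_assoc]
  field_simp

theorem rlInt_prabhakarTerm_mul_rpow {β γ μ t : ℝ} (hβ : 0 ≤ β) (hγ : 0 < γ) (hμ : 0 < μ)
    (ht : 0 < t) (δ z : ℝ) (τ : ℕ) :
    rlInt μ (fun u => prabhakarTerm β γ δ z τ * u ^ (β * τ + γ - 1)) t =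
      t ^ (γ + μ - 1) * prabhakarTerm β (γ + μ) δ (z * t ^ β) τ := by
  have hp : 0 < β * τ + γ := by positivity
  rw [rlInt_const_mul, rlInt_rpow_sub_one hp hμ ht, add_assoc, rpow_mul_natCast_add_sub_one ht,
    ← prabhakarTerm_mul_pow, ← prabhakarTerm_mul_Gamma_div (Gamma_pos_of_pos hp).ne', add_assoc]
  ring

theorem rl_integral_of_prabhakar_general (β γ δ μ : ℝ) (hβ : 0 < β) (hγ : 0 < γ)
    (hμ : 0 < μ) (a : ℝ) :
    ∀ t : ℝ, 0 < t →
      rlInt μ (fun u => u ^ (γ - 1) * prabhakar β γ δ (a * u ^ β)) t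
        = t ^ (γ + μ - 1) * prabhakar β (γ + μ) δ (a * t ^ β) := by
  intro t ht
  have hp : ∀ τ : ℕ, 0 < β * τ + γ := fun τ => by positivity
  have hseries : EqOn (fun u => u ^ (γ - 1) * prabhakar β γ δ (a * u ^ β))
      (fun u => ∑' τ : ℕ, prabhakarTerm β γ δ a τ * u ^ (β * τ + γ - 1)) (Ioc 0 t) := by
    intro u hu
    simp only [prabhakar_eq_tsum, ← tsum_mul_left, rpow_mul_natCast_add_sub_one hu.1,
      ← prabhakarTerm_mul_pow]
    exact tsum_congr fun τ => by ring
  rw [rlInt_congr ht.le hseries, rlInt_tsum hμ ht.le, prabhakar_eq_tsum, ← tsum_mul_left]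
  · exact tsum_congr (rlInt_prabhakarTerm_mul_rpow hβ.le hγ hμ ht δ a)
  · intro τ
    convert (intervalIntegrable_rpow_mul_sub_rpow (hp τ) hμ ht).const_mul
      (prabhakarTerm β γ δ a τ) using 1
    ext u
    ring
  · refine ((summable_prabhakarTerm hβ (γ + μ) δ (a * t ^ β)).mul_left
      (t ^ (γ + μ - 1))).abs.congr fun τ => ?_
    rw [rlInt_abs_const_mul_rpow_sub_one (hp τ) hμ ht, rlInt_prabhakarTerm_mul_rpow hβ.le hγ hμ ht]

theorem rl_integral_of_prabhakar (β γ δ μ : ℝ) (hβ : 0 < β) (hγ : 0 < γ) (hδ : 0 < δ)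
    (hμ : 0 < μ) (a : ℝ) :
    ∀ t : ℝ, 0 < t →
      rlInt μ (fun u => u ^ (γ - 1) * prabhakar β γ δ (a * u ^ β)) t
        = t ^ (γ + μ - 1) * prabhakar β (γ + μ) δ (a * t ^ β) :=
  rl_integral_of_prabhakar_general β γ δ μ hβ hγ hμ a
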